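/- Let ψ ∈ ℂ^d be a unit vector and define the Werner cloning map ℰ(ρ) = (d₊(n)/d₊(n+k)) · Π₊^{(n+k)} (ρ ⊗ I^{⊗k}) Π₊^{(n+k)} on the symmetric subspace of (ℂ^d)^{⊗n}, where d₊(r) = binomial(r+d-1, d-1). Then ℰ is trace-preserving on states supported on the symmetric subspace, and the fidelity of its output with n+k perfect copies satisfies F(ℰ(|ψ⟩⟨ψ|^{⊗n}), |ψ⟩⟨ψ|^{⊗(n+k)}) = √(d₊(n)/d₊(n+k)), where F(ρ,σ) = ‖√ρ √σ‖₁. -/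

import Mathlib

open Matrix
open scoped Kronecker ComplexOrder
open scoped Classical

variable {n : Type*} [Fintype n] [DecidableEq n]

/-- Density matrix predicate -/
def IsDensityMatrix (ρ : Matrix n n ℂ) : Prop := ρ.PosSemidef ∧ ρ.trace = 1

/-- von Neumann entropy, base 2 -/
noncomputable def vnEntropy (A : Matrix n n ℂ) : ℝ :=
  if h : A.IsHermitian then -∑ i, h.eigenvalues i * Real.logb 2 (h.eigenvalues i) else 0

/-- twirl over a finite group -/
noncomputable def twirl {G : Type*} [Group G] [Fintype G]
    (U : G →* Matrix.unitaryGroup n ℂ) (ρ : Matrix n n ℂ) : Matrix n n ℂ :=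
  (Fintype.card G : ℂ)⁻¹ • ∑ g : G, (U g : Matrix n n ℂ) * ρ * star (U g : Matrix n n ℂ)

/-- relative entropy of asymmetry -/
noncomputable def relEntAsym {G : Type*} [Group G] [Fintype G]
    (U : G →* Matrix.unitaryGroup n ℂ) (ρ : Matrix n n ℂ) : ℝ :=
  vnEntropy (twirl U ρ) - vnEntropy ρ

/-- the old Mathlib `Matrix.PosSemidef.sqrt` (removed upstream), restated verbatim -/
noncomputable def Matrix.PosSemidef.sqrt {A : Matrix n n ℂ} (hA : A.PosSemidef) : Matrix n n ℂ :=
  (hA.1.eigenvectorUnitary : Matrix n n ℂ) * Matrix.diagonal ((↑) ∘ Real.sqrt ∘ hA.1.eigenvalues) *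
    (star hA.1.eigenvectorUnitary : Matrix n n ℂ)

/-- square root of a PSD matrix (0 otherwise) -/
noncomputable def sqrtPSD (A : Matrix n n ℂ) : Matrix n n ℂ :=
  if h : A.PosSemidef then h.sqrt else 0

/-- trace norm -/
noncomputable def traceNorm (A : Matrix n n ℂ) : ℝ :=
  ((Matrix.posSemidef_conjTranspose_mul_self A).sqrt.trace).re

/-- fidelity F(ρ,σ) = ‖√ρ√σ‖₁ -/
noncomputable def fidelity (ρ σ : Matrix n n ℂ) : ℝ := traceNorm (sqrtPSD ρ * sqrtPSD σ)

/-- binary entropy, base 2 -/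
noncomputable def binEntropy2 (x : ℝ) : ℝ := -x * Real.logb 2 x - (1-x) * Real.logb 2 (1-x)

/-- matrix logarithm (base 2) of a Hermitian matrix -/
noncomputable def matLogb (A : Matrix n n ℂ) : Matrix n n ℂ :=
  if h : A.IsHermitian then
    (h.eigenvectorUnitary : Matrix n n ℂ) *
      Matrix.diagonal (fun i => (Real.logb 2 (h.eigenvalues i) : ℂ)) *
      star (h.eigenvectorUnitary : Matrix n n ℂ)
  else 0

/-- quantum relative entropy, +∞ if support condition fails -/
noncomputable def relEntropy (ρ σ : Matrix n n ℂ) : EReal :=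
  if ∀ v : n → ℂ, σ *ᵥ v = 0 → ρ *ᵥ v = 0 then
    (((ρ * (matLogb ρ - matLogb σ)).trace).re : EReal)
  else ⊤

/-- complete positivity -/
def IsCompletelyPositive {m : Type*} [Fintype m] [DecidableEq m]
    (Φ : Matrix n n ℂ →ₗ[ℂ] Matrix m m ℂ) : Prop :=
  ∀ (k : ℕ) (M : Matrix (Fin k × n) (Fin k × n) ℂ), M.PosSemidef →
    (Matrix.of fun p q : Fin k × m =>
      (Φ (Matrix.of fun a b => M (p.1, a) (q.1, b))) p.2 q.2).PosSemidef

/-- CPTP map -/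
def IsQuantumChannel {m : Type*} [Fintype m] [DecidableEq m]
    (Φ : Matrix n n ℂ →ₗ[ℂ] Matrix m m ℂ) : Prop :=
  IsCompletelyPositive Φ ∧ ∀ A, (Φ A).trace = A.trace

/-- G-covariance of a map between systems with representations U, V -/
def IsCovariant {m : Type*} [Fintype m] [DecidableEq m] {G : Type*} [Group G]
    (U : G →* Matrix.unitaryGroup n ℂ) (V : G →* Matrix.unitaryGroup m ℂ)
    (Φ : Matrix n n ℂ →ₗ[ℂ] Matrix m m ℂ) : Prop :=
  ∀ g A, Φ ((U g : Matrix n n ℂ) * A * star (U g : Matrix n n ℂ))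
    = (V g : Matrix m m ℂ) * Φ A * star (V g : Matrix m m ℂ)

noncomputable def tensorPowMat {d : ℕ} (U : Matrix (Fin d) (Fin d) ℂ) (r : ℕ) :
    Matrix (Fin r → Fin d) (Fin r → Fin d) ℂ :=
  Matrix.of fun f g => ∏ i, U (f i) (g i)

/-- the matrix |ψ⟩⟨ψ|^{⊗ r} -/
noncomputable def pureTensorPow {d : ℕ} (ψ : Fin d → ℂ) (r : ℕ) :
    Matrix (Fin r → Fin d) (Fin r → Fin d) ℂ :=
  Matrix.of fun f g => ∏ i, ψ (f i) * star (ψ (g i))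

/-- projector onto the symmetric subspace of (ℂ^d)^{⊗ r} -/
noncomputable def symProj (d r : ℕ) : Matrix (Fin r → Fin d) (Fin r → Fin d) ℂ :=
  ((r.factorial : ℂ))⁻¹ •
    ∑ π : Equiv.Perm (Fin r), Matrix.of fun f g => if f = g ∘ π then (1:ℂ) else 0

/-- identification of ((ℂ^d)^{⊗n}) ⊗ ((ℂ^d)^{⊗k}) with (ℂ^d)^{⊗(n+k)} -/
def tensorSplit (d n k : ℕ) : ((Fin n → Fin d) × (Fin k → Fin d)) ≃ (Fin (n + k) → Fin d) :=
  (Equiv.sumArrowEquivProdArrow (Fin n) (Fin k) (Fin d)).symm.trans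
    (Equiv.arrowCongr finSumFinEquiv (Equiv.refl (Fin d)))

/-- the Werner cloning map from n to n+k copies -/
noncomputable def wernerClone (d n k : ℕ)
    (ρ : Matrix (Fin n → Fin d) (Fin n → Fin d) ℂ) :
    Matrix (Fin (n + k) → Fin d) (Fin (n + k) → Fin d) ℂ :=
  (((n + d - 1).choose (d - 1) : ℂ) / ((n + k + d - 1).choose (d - 1))) •
    (symProj d (n + k) *
      (Matrix.reindex (tensorSplit d n k) (tensorSplit d n k)
        (ρ ⊗ₖ (1 : Matrix (Fin k → Fin d) (Fin k → Fin d) ℂ))) *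
      symProj d (n + k))

/-!
The symmetric projector `P_r` is the average of the permutation matrices of `S_r`, so its entry at
a pair of words `f, g ∈ [d]^r` is `∏ᵢ mᵢ! / r!` when `f` and `g` have the same letter counts `mᵢ`,
and `0` otherwise. Summing these entries over the last `k` letters of both words, an induction on
`k` gives the partial trace `Tr_k P_{n+k} = (d₊(n+k) / d₊(n)) P_n`, which is trace preservation on
states supported on the symmetric subspace. For the fidelity, the target `ψ^{⊗(n+k)}` is a pure
state `|v⟩⟨v|`, so `F(ρ, |v⟩⟨v|) = √⟨v|ρ|v⟩`; and `v` is fixed by `P_{n+k}`, whence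
`⟨v|P_{n+k} (|ψ⟩⟨ψ|^{⊗n} ⊗ I) P_{n+k}|v⟩ = ⟨v|(|ψ⟩⟨ψ|^{⊗n} ⊗ I)|v⟩ = 1`.
-/

open Finset Equiv
open scoped Nat MatrixOrder

section Fidelity

variable {m : Type*} [Fintype m]

lemma Matrix.PosSemidef.sqrt_eq_cfcSqrt [DecidableEq m] {A : Matrix m m ℂ}
    (hA : A.PosSemidef) : hA.sqrt = CFC.sqrt A := by
  rw [CFC.sqrt_eq_real_sqrt A hA.nonneg, cfcₙ_eq_cfc, hA.1.cfc_eq, IsHermitian.cfc,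
    Unitary.conjStarAlgAut_apply]
  rfl

lemma sqrtPSD_eq_cfcSqrt [DecidableEq m] {A : Matrix m m ℂ} (hA : A.PosSemidef) :
    sqrtPSD A = CFC.sqrt A :=
  (dif_pos hA).trans hA.sqrt_eq_cfcSqrt

lemma traceNorm_eq_re_trace_cfcSqrt [DecidableEq m] (A : Matrix m m ℂ) :
    traceNorm A = (CFC.sqrt (Aᴴ * A)).trace.re := by
  rw [traceNorm, PosSemidef.sqrt_eq_cfcSqrt]

lemma vecMulVec_self_star_mul_self {v : m → ℂ} (hv : star v ⬝ᵥ v = 1) :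
    vecMulVec v (star v) * vecMulVec v (star v) = vecMulVec v (star v) := by
  rw [vecMulVec_mul_vecMulVec, hv, one_smul]

lemma vecMulVec_self_star_mul_mul_self (v : m → ℂ) (A : Matrix m m ℂ) :
    vecMulVec v (star v) * A * vecMulVec v (star v) =
      (star v ⬝ᵥ (A *ᵥ v)) • vecMulVec v (star v) := by
  rw [vecMulVec_mul, vecMulVec_mul_vecMulVec, ← dotProduct_mulVec, vecMulVec_smul]

theorem fidelity_vecMulVec_self_star [DecidableEq m] {ρ : Matrix m m ℂ} (hρ : ρ.PosSemidef)
    {v : m → ℂ} (hv : star v ⬝ᵥ v = 1) :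
    fidelity ρ (vecMulVec v (star v)) = √(star v ⬝ᵥ (ρ *ᵥ v)).re := by
  set σ := vecMulVec v (star v)
  have hσ : σ.PosSemidef := posSemidef_vecMulVec_self_star v
  have hσσ : σ * σ = σ := vecMulVec_self_star_mul_self hv
  obtain ⟨c, hc, hcv⟩ : ∃ c : ℝ, 0 ≤ c ∧ star v ⬝ᵥ (ρ *ᵥ v) = c := by
    have h0 := hρ.dotProduct_mulVec_nonneg v
    exact ⟨_, (Complex.nonneg_iff.1 h0).1, Complex.eq_re_of_ofReal_le (r := 0) (by simpa using h0)⟩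
  have hsqrtρ : CFC.sqrt ρ * CFC.sqrt ρ = ρ := CFC.sqrt_mul_sqrt_self ρ hρ.nonneg
  have hself : (CFC.sqrt ρ)ᴴ = CFC.sqrt ρ := (CFC.sqrt_nonneg ρ).isSelfAdjoint
  -- `|√ρ σ| = √(σ ρ σ)`, and `σ ρ σ = ⟨v|ρ|v⟩ σ` with `σ` a projection.
  have hB : (CFC.sqrt ρ * σ)ᴴ * (CFC.sqrt ρ * σ) = (c : ℂ) • σ :=
    calc (CFC.sqrt ρ * σ)ᴴ * (CFC.sqrt ρ * σ) = σ * (CFC.sqrt ρ * CFC.sqrt ρ) * σ := by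
          rw [conjTranspose_mul, hσ.1, hself]; simp only [Matrix.mul_assoc]
      _ = (c : ℂ) • σ := by rw [hsqrtρ, vecMulVec_self_star_mul_mul_self, hcv]
  have hsqrtB : CFC.sqrt ((c : ℂ) • σ) = (√c : ℂ) • σ := by
    refine CFC.sqrt_unique ?_ (hσ.smul (Real.sqrt_nonneg c)).nonneg
    rw [smul_mul_smul, hσσ, ← Complex.ofReal_mul, Real.mul_self_sqrt hc]
  rw [fidelity, sqrtPSD_eq_cfcSqrt hρ, sqrtPSD_eq_cfcSqrt hσ, CFC.sqrt_unique hσσ hσ.nonneg,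
    traceNorm_eq_re_trace_cfcSqrt, hB, hsqrtB, trace_smul, trace_vecMulVec, dotProduct_comm, hv,
    hcv]
  simp

end Fidelity

namespace Matrix

variable {m p R : Type*} [Fintype m] [Fintype p] [DecidableEq p]

/-- The partial trace over the second tensor factor. -/
def traceRight [AddCommMonoid R] (M : Matrix (m × p) (m × p) R) : Matrix m m R :=
  of fun i j => ∑ h, M (i, h) (j, h)

lemma trace_kronecker_one_mul [Semiring R] (A : Matrix m m R) (M : Matrix (m × p) (m × p) R) :
    trace ((A ⊗ₖ (1 : Matrix p p R)) * M) = trace (A * traceRight M) := by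
  simp only [trace, diag_apply, mul_apply, kroneckerMap_apply, one_apply, mul_ite, mul_one,
    mul_zero, ite_mul, zero_mul, Fintype.sum_prod_type, sum_ite_eq, mem_univ, if_true,
    traceRight, of_apply, mul_sum]
  exact sum_congr rfl fun _ _ => sum_comm

lemma dotProduct_kronecker_one_mulVec [CommSemiring R] [StarRing R] (A : Matrix m m R)
    (x : m → R) (y : p → R) :
    star (fun q : m × p => x q.1 * y q.2) ⬝ᵥ
        ((A ⊗ₖ (1 : Matrix p p R)) *ᵥ fun q => x q.1 * y q.2) =
      (star x ⬝ᵥ (A *ᵥ x)) * (star y ⬝ᵥ y) := by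
  simp only [dotProduct, mulVec, Fintype.sum_prod_type, kroneckerMap_apply, one_apply,
    Pi.star_apply, star_mul', mul_ite, mul_one, mul_zero, ite_mul, zero_mul, sum_ite_eq,
    mem_univ, if_true, sum_mul, mul_sum]
  rw [sum_comm]
  exact sum_congr rfl fun _ _ => sum_congr rfl fun _ _ => sum_congr rfl fun _ _ => by ring

lemma trace_submatrix_equiv {m' : Type*} [Fintype m'] [AddCommMonoid R] (M : Matrix m m R)
    (e : m' ≃ m) : (M.submatrix e e).trace = M.trace :=
  Fintype.sum_equiv e _ _ fun _ => rfl

end Matrix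

section FiberCard

variable {α ι : Type*} [Fintype α] [DecidableEq ι]

def fiberCard (a : α → ι) (i : ι) : ℕ := #{j | a j = i}

lemma fiberCard_eq_card_subtype (a : α → ι) (i : ι) :
    fiberCard a i = Fintype.card {j // a j = i} :=
  (Fintype.card_subtype _).symm

lemma fiberCard_comp_perm (b : α → ι) (π : Perm α) : fiberCard (b ∘ π) = fiberCard b := by
  ext i
  simp only [fiberCard_eq_card_subtype]
  exact Fintype.card_congr (π.subtypeEquiv fun _ => Iff.rfl)

lemma sum_fiberCard [Fintype ι] (a : α → ι) : ∑ i, fiberCard a i = Fintype.card α :=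
  (card_eq_sum_card_fiberwise fun _ _ => mem_univ _).symm

lemma exists_perm_of_fiberCard_eq {a b : α → ι} (h : fiberCard a = fiberCard b) :
    ∃ π : Perm α, a = b ∘ π := by
  have e : ∀ i, {j // a j = i} ≃ {j // b j = i} := fun i =>
    Fintype.equivOfCardEq (by rw [← fiberCard_eq_card_subtype, ← fiberCard_eq_card_subtype, h])
  refine ⟨(sigmaFiberEquiv a).symm.trans ((sigmaCongrRight e).trans (sigmaFiberEquiv b)),
    funext fun x => ?_⟩
  exact ((e (a x)) ⟨x, rfl⟩).2.symm

lemma card_perm_comp_eq [DecidableEq α] [Fintype ι] (a b : α → ι) :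
    #{π : Perm α | a = b ∘ π} =
      if fiberCard a = fiberCard b then ∏ i, (fiberCard a i)! else 0 := by
  split_ifs with h
  · -- the solutions `π` form the coset `Stab(b) * π₀`
    obtain ⟨π₀, rfl⟩ := exists_perm_of_fiberCard_eq h
    rw [← Fintype.card_subtype, fiberCard_comp_perm]
    simp_rw [fiberCard_eq_card_subtype, ← DomMulAct.stabilizer_card]
    refine Fintype.card_congr ((Equiv.mulRight π₀).subtypeEquiv fun σ => ?_).symm
    simp only [coe_mulRight, Perm.coe_mul]
    exact ⟨fun hσ => by rw [← Function.comp_assoc, hσ],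
      fun hσ => π₀.surjective.injective_comp_right hσ.symm⟩
  · rw [card_eq_zero, filter_eq_empty_iff]
    rintro π - rfl
    exact h (fiberCard_comp_perm b π)

variable {d : ℕ}

lemma fiberCard_cons {k : ℕ} (x : Fin d) (h : Fin k → Fin d) (i : Fin d) :
    fiberCard (Fin.cons x h : Fin (k + 1) → Fin d) i = fiberCard h i + if x = i then 1 else 0 := by
  simp only [fiberCard, card_filter, Fin.sum_univ_succ, Fin.cons_zero, Fin.cons_succ]
  exact add_comm _ _

lemma prod_factorial_add_fiberCard_cons (m : Fin d → ℕ) {k : ℕ} (x : Fin d)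
    (h : Fin k → Fin d) :
    ∏ i, (m i + fiberCard (Fin.cons x h : Fin (k + 1) → Fin d) i)! =
      (m x + fiberCard h x + 1) * ∏ i, (m i + fiberCard h i)! := by
  have hstep : ∀ i, (m i + fiberCard (Fin.cons x h : Fin (k + 1) → Fin d) i)! =
      (if x = i then m i + fiberCard h i + 1 else 1) * (m i + fiberCard h i)! := by
    intro i
    split_ifs with hxi <;> simp [fiberCard_cons, hxi, ← add_assoc, Nat.factorial_succ]
  simp_rw [hstep, prod_mul_distrib, prod_ite_eq, mem_univ, if_true]

lemma sum_prod_factorial_add_fiberCard (m : Fin d → ℕ) (k : ℕ) :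
    ∑ h : Fin k → Fin d, ∏ i, (m i + fiberCard h i)! =
      (∑ i, m i + d).ascFactorial k * ∏ i, (m i)! := by
  induction k with
  | zero => simp [fiberCard]
  | succ k ih =>
    rw [← (Fin.consEquiv fun _ => Fin d).sum_comp, Fintype.sum_prod_type, sum_comm]
    simp only [Fin.consEquiv, Equiv.coe_fn_mk, prod_factorial_add_fiberCard_cons, ← sum_mul]
    have hcount : ∀ h : Fin k → Fin d, ∑ x, (m x + fiberCard h x + 1) = ∑ i, m i + d + k := by
      intro h
      simp only [sum_add_distrib, sum_fiberCard, Fintype.card_fin, sum_const, card_univ,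
        smul_eq_mul, mul_one]
      ring
    simp_rw [hcount, ← mul_sum, ih, Nat.ascFactorial_succ]
    ring

end FiberCard

/-- `d₊(r)`, the dimension of the symmetric subspace of `(ℂ^d)^{⊗r}`. -/
def symDim (d r : ℕ) : ℕ := (r + d - 1).choose (d - 1)

lemma symDim_pos {d : ℕ} (hd : 0 < d) (r : ℕ) : 0 < symDim d r :=
  Nat.choose_pos (by omega)

lemma symDim_mul_factorial_mul_factorial {d : ℕ} (hd : 0 < d) (r : ℕ) :
    symDim d r * (d - 1)! * r ! = (r + d - 1)! := by
  have := Nat.choose_mul_factorial_mul_factorial (n := r + d - 1) (k := d - 1) (by omega)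
  rwa [show r + d - 1 - (d - 1) = r by omega] at this

lemma symDim_mul_ascFactorial {d : ℕ} (hd : 0 < d) (n k : ℕ) :
    symDim d n * (n + d).ascFactorial k * n ! = symDim d (n + k) * (n + k)! := by
  apply Nat.eq_of_mul_eq_mul_right (Nat.factorial_pos (d - 1))
  have hasc := Nat.factorial_mul_ascFactorial (n + d - 1) k
  rw [show n + d - 1 + 1 = n + d by omega, show n + d - 1 + k = n + k + d - 1 by omega] at hasc
  calc symDim d n * (n + d).ascFactorial k * n ! * (d - 1)!
      = symDim d n * (d - 1)! * n ! * (n + d).ascFactorial k := by ring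
    _ = symDim d (n + k) * (d - 1)! * (n + k)! := by
      rw [symDim_mul_factorial_mul_factorial hd, hasc, symDim_mul_factorial_mul_factorial hd]
    _ = symDim d (n + k) * (n + k)! * (d - 1)! := by ring

section SymmetricProjector

variable {d r : ℕ}

def permFactors (d : ℕ) (π : Perm (Fin r)) : Perm (Fin r → Fin d) :=
  π.arrowCongr (Equiv.refl (Fin d))

lemma permFactors_apply (π : Perm (Fin r)) (f : Fin r → Fin d) :
    permFactors d π f = f ∘ ⇑π⁻¹ :=
  rfl

lemma permFactors_mul (π σ : Perm (Fin r)) :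
    permFactors d (π * σ) = permFactors d π * permFactors d σ :=
  rfl

lemma permFactors_inv (π : Perm (Fin r)) : permFactors d π⁻¹ = (permFactors d π)⁻¹ :=
  rfl

lemma symProj_eq_sum_permMatrix (d r : ℕ) :
    symProj d r = (r ! : ℂ)⁻¹ • ∑ π : Perm (Fin r), (permFactors d π).permMatrix ℂ := by
  unfold symProj
  congr 2 with π f g
  simp only [of_apply, PEquiv.toMatrix_apply, toPEquiv_apply, Option.mem_def, Option.some.injEq]
  congr 1
  exact propext ⟨fun h => h ▸ by ext; simp [permFactors_apply],
    fun h => h ▸ by ext; simp [permFactors_apply]⟩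

lemma symProj_mul_self (d r : ℕ) : symProj d r * symProj d r = symProj d r := by
  have hsum : ∀ σ : Perm (Fin r), ∑ π : Perm (Fin r), (permFactors d (σ * π)).permMatrix ℂ
      = ∑ π : Perm (Fin r), (permFactors d π).permMatrix ℂ := fun σ =>
    Equiv.sum_comp (Equiv.mulLeft σ) (fun π => (permFactors d π).permMatrix ℂ)
  rw [symProj_eq_sum_permMatrix, smul_mul_smul, sum_mul_sum, sum_comm]
  simp_rw [← permMatrix_mul, ← permFactors_mul, hsum, sum_const, card_univ,
    Fintype.card_perm, Fintype.card_fin, ← Nat.cast_smul_eq_nsmul ℂ, smul_smul]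
  field_simp

lemma symProj_isHermitian (d r : ℕ) : (symProj d r).IsHermitian := by
  rw [IsHermitian, symProj_eq_sum_permMatrix, conjTranspose_smul, conjTranspose_sum]
  simp_rw [conjTranspose_permMatrix, ← permFactors_inv]
  rw [Fintype.sum_equiv (Equiv.inv _) (fun π => (permFactors d π⁻¹).permMatrix ℂ)
    (fun π => (permFactors d π).permMatrix ℂ) fun _ => rfl]
  simp

lemma symProj_apply (f g : Fin r → Fin d) :
    symProj d r f g =
      if fiberCard f = fiberCard g then (∏ i, ((fiberCard f i)! : ℂ)) / r ! else 0 := by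
  simp only [symProj, Matrix.smul_apply, Matrix.sum_apply, of_apply, smul_eq_mul, sum_boole,
    card_perm_comp_eq]
  split_ifs <;> simp [div_eq_inv_mul]

lemma tensorSplit_apply {n k : ℕ} (p : (Fin n → Fin d) × (Fin k → Fin d)) :
    tensorSplit d n k p = Fin.append p.1 p.2 := by
  ext i
  refine Fin.addCases (fun j => ?_) (fun j => ?_) i <;>
    simp [tensorSplit, sumArrowEquivProdArrow]

lemma fiberCard_tensorSplit {n k : ℕ} (f : Fin n → Fin d) (h : Fin k → Fin d) :
    fiberCard (tensorSplit d n k (f, h)) = fiberCard f + fiberCard h := by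
  ext i
  simp only [fiberCard, card_filter, tensorSplit_apply, Fin.sum_univ_add, Fin.append_left,
    Fin.append_right, Pi.add_apply]

lemma traceRight_symProj (hd : 0 < d) (n k : ℕ) :
    traceRight ((symProj d (n + k)).submatrix (tensorSplit d n k) (tensorSplit d n k)) =
      ((symDim d (n + k) : ℂ) / symDim d n) • symProj d n := by
  ext g f
  simp only [traceRight, of_apply, submatrix_apply, symProj_apply, fiberCard_tensorSplit,
    add_left_inj, Matrix.smul_apply, smul_eq_mul]
  split_ifs with hgf
  · have hsymDim : (symDim d n : ℂ) ≠ 0 := Nat.cast_ne_zero.2 (symDim_pos hd n).ne'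
    have hid : (symDim d n * (n + d).ascFactorial k * n ! : ℂ) = symDim d (n + k) * (n + k)! := by
      exact_mod_cast symDim_mul_ascFactorial hd n k
    have hsum : ∑ h : Fin k → Fin d, ∏ i, ((fiberCard g i + fiberCard h i)! : ℂ) =
        (n + d).ascFactorial k * ∏ i, ((fiberCard g i)! : ℂ) := by
      have := sum_prod_factorial_add_fiberCard (fiberCard g) k
      rw [sum_fiberCard, Fintype.card_fin] at this
      exact_mod_cast this
    simp only [Pi.add_apply]
    rw [← sum_div, hsum]
    field_simp
    linear_combination hid
  · simp

end SymmetricProjector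

section TensorPower

lemma star_dotProduct_self_eq_sum_norm_sq {ι : Type*} [Fintype ι] (ψ : ι → ℂ) :
    star ψ ⬝ᵥ ψ = ((∑ i, ‖ψ i‖ ^ 2 : ℝ) : ℂ) := by
  simp [dotProduct, Complex.conj_mul']

variable {d : ℕ}

def tensorPowVec (ψ : Fin d → ℂ) (r : ℕ) : (Fin r → Fin d) → ℂ :=
  fun f => ∏ i, ψ (f i)

lemma pureTensorPow_eq_vecMulVec (ψ : Fin d → ℂ) (r : ℕ) :
    pureTensorPow ψ r = vecMulVec (tensorPowVec ψ r) (star (tensorPowVec ψ r)) := by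
  ext f g
  simp [pureTensorPow, tensorPowVec, vecMulVec_apply, prod_mul_distrib]

lemma pureTensorPow_posSemidef (ψ : Fin d → ℂ) (r : ℕ) : (pureTensorPow ψ r).PosSemidef := by
  rw [pureTensorPow_eq_vecMulVec]
  exact posSemidef_vecMulVec_self_star _

lemma star_tensorPowVec_dotProduct (ψ : Fin d → ℂ) (r : ℕ) :
    star (tensorPowVec ψ r) ⬝ᵥ tensorPowVec ψ r = (star ψ ⬝ᵥ ψ) ^ r := by
  simp only [dotProduct, tensorPowVec, Pi.star_apply, star_prod, ← prod_mul_distrib]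
  rw [← Fintype.prod_sum (fun (_ : Fin r) (j : Fin d) => star (ψ j) * ψ j), prod_const,
    card_univ, Fintype.card_fin]

lemma tensorPowVec_comp_tensorSplit (ψ : Fin d → ℂ) (n k : ℕ) :
    tensorPowVec ψ (n + k) ∘ tensorSplit d n k =
      fun p => tensorPowVec ψ n p.1 * tensorPowVec ψ k p.2 := by
  ext p
  simp [tensorPowVec, tensorSplit_apply, Fin.prod_univ_add]

lemma symProj_mulVec_tensorPowVec (ψ : Fin d → ℂ) (r : ℕ) :
    symProj d r *ᵥ tensorPowVec ψ r = tensorPowVec ψ r := by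
  have hperm : ∀ π : Perm (Fin r),
      (permFactors d π).permMatrix ℂ *ᵥ tensorPowVec ψ r = tensorPowVec ψ r := by
    intro π
    ext f
    rw [permMatrix_mulVec]
    exact Equiv.prod_comp π⁻¹ (fun i => ψ (f i))
  rw [symProj_eq_sum_permMatrix, smul_mulVec, sum_mulVec]
  simp_rw [hperm, sum_const, card_univ, Fintype.card_perm, Fintype.card_fin,
    ← Nat.cast_smul_eq_nsmul ℂ, smul_smul]
  rw [inv_mul_cancel₀ (Nat.cast_ne_zero.2 r.factorial_ne_zero), one_smul]

end TensorPower

section WernerClone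

variable {d n k : ℕ}

lemma wernerClone_eq (ρ : Matrix (Fin n → Fin d) (Fin n → Fin d) ℂ) :
    wernerClone d n k ρ = ((symDim d n : ℂ) / symDim d (n + k)) •
      (symProj d (n + k) * (ρ ⊗ₖ 1).submatrix (tensorSplit d n k).symm (tensorSplit d n k).symm *
        symProj d (n + k)) :=
  rfl

lemma trace_wernerClone (hd : 0 < d) {ρ : Matrix (Fin n → Fin d) (Fin n → Fin d) ℂ}
    (hρ : symProj d n * ρ * symProj d n = ρ) : (wernerClone d n k ρ).trace = ρ.trace := by
  set e := tensorSplit d n k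
  set P := symProj d (n + k)
  have hsymDim : (symDim d n : ℂ) ≠ 0 := Nat.cast_ne_zero.2 (symDim_pos hd n).ne'
  have hsymDim' : (symDim d (n + k) : ℂ) ≠ 0 := Nat.cast_ne_zero.2 (symDim_pos hd (n + k)).ne'
  have hρP : ρ * symProj d n = ρ := by rw [← hρ, Matrix.mul_assoc, symProj_mul_self]
  have hP : (P * (ρ ⊗ₖ 1).submatrix e.symm e.symm * P).trace =
      ((ρ ⊗ₖ 1) * P.submatrix e e).trace := by
    rw [trace_mul_cycle, symProj_mul_self, trace_mul_comm,
      ← trace_submatrix_equiv ((ρ ⊗ₖ 1) * P.submatrix e e) e.symm,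
      ← submatrix_mul_equiv _ _ _ e.symm, submatrix_submatrix, e.self_comp_symm, submatrix_id_id]
  rw [wernerClone_eq, trace_smul, hP, trace_kronecker_one_mul, traceRight_symProj hd,
    mul_smul_comm, trace_smul, hρP, smul_eq_mul, smul_eq_mul]
  field_simp

lemma wernerClone_posSemidef {ρ : Matrix (Fin n → Fin d) (Fin n → Fin d) ℂ}
    (hρ : ρ.PosSemidef) : (wernerClone d n k ρ).PosSemidef := by
  have hsand := ((hρ.kronecker (PosSemidef.one (n := Fin k → Fin d))).submatrix
    (tensorSplit d n k).symm).conjTranspose_mul_mul_same (symProj d (n + k))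
  rw [(symProj_isHermitian d (n + k)).eq] at hsand
  rw [wernerClone_eq, ← Complex.ofReal_natCast, ← Complex.ofReal_natCast, ← Complex.ofReal_div]
  exact hsand.smul (by positivity)

lemma dotProduct_wernerClone_pureTensorPow_mulVec (ψ : Fin d → ℂ) (hψ : star ψ ⬝ᵥ ψ = 1) :
    star (tensorPowVec ψ (n + k)) ⬝ᵥ
        (wernerClone d n k (pureTensorPow ψ n) *ᵥ tensorPowVec ψ (n + k)) =
      symDim d n / symDim d (n + k) := by
  set v := tensorPowVec ψ (n + k) with hv
  have hPv : symProj d (n + k) *ᵥ v = v := symProj_mulVec_tensorPowVec ψ (n + k)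
  have hvP : star v ᵥ* symProj d (n + k) = star v := by
    simpa only [star_mulVec, (symProj_isHermitian d (n + k)).eq] using congrArg star hPv
  rw [wernerClone_eq, smul_mulVec, dotProduct_smul, ← mulVec_mulVec, hPv, ← mulVec_mulVec,
    dotProduct_mulVec, hvP, submatrix_mulVec_equiv, Equiv.symm_symm, dotProduct_comp_equiv_symm]
  change _ • (star (v ∘ tensorSplit d n k) ⬝ᵥ _) = _
  rw [hv, tensorPowVec_comp_tensorSplit, dotProduct_kronecker_one_mulVec,
    pureTensorPow_eq_vecMulVec, vecMulVec_mulVec]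
  simp only [op_smul_eq_smul, dotProduct_smul, star_tensorPowVec_dotProduct, hψ, one_pow,
    smul_eq_mul, mul_one]

end WernerClone

theorem wernerClone_trace_and_fidelity_general {d n k : ℕ} (hd : 1 ≤ d)
    (ψ : Fin d → ℂ) (hψ : ∑ i, ‖ψ i‖ ^ 2 = 1) :
    (∀ ρ : Matrix (Fin n → Fin d) (Fin n → Fin d) ℂ, ρ.PosSemidef →
      symProj d n * ρ * symProj d n = ρ → (wernerClone d n k ρ).trace = ρ.trace) ∧
    fidelity (wernerClone d n k (pureTensorPow ψ n)) (pureTensorPow ψ (n + k))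
      = Real.sqrt (((n + d - 1).choose (d - 1) : ℝ) / ((n + k + d - 1).choose (d - 1))) := by
  have hψ' : star ψ ⬝ᵥ ψ = 1 := by
    rw [star_dotProduct_self_eq_sum_norm_sq, hψ, Complex.ofReal_one]
  have hv : star (tensorPowVec ψ (n + k)) ⬝ᵥ tensorPowVec ψ (n + k) = 1 := by
    rw [star_tensorPowVec_dotProduct, hψ', one_pow]
  refine ⟨fun ρ _ hρ => trace_wernerClone hd hρ, ?_⟩
  rw [pureTensorPow_eq_vecMulVec ψ (n + k),
    fidelity_vecMulVec_self_star (wernerClone_posSemidef (pureTensorPow_posSemidef ψ n)) hv,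
    dotProduct_wernerClone_pureTensorPow_mulVec ψ hψ', ← Complex.ofReal_natCast,
    ← Complex.ofReal_natCast, ← Complex.ofReal_div, Complex.ofReal_re]
  rfl

theorem wernerClone_trace_and_fidelity {d n k : ℕ} (hd : 1 ≤ d) (hn : 1 ≤ n)
    (ψ : Fin d → ℂ) (hψ : ∑ i, ‖ψ i‖ ^ 2 = 1) :
    (∀ ρ : Matrix (Fin n → Fin d) (Fin n → Fin d) ℂ, ρ.PosSemidef →
      symProj d n * ρ * symProj d n = ρ → (wernerClone d n k ρ).trace = ρ.trace) ∧
    fidelity (wernerClone d n k (pureTensorPow ψ n)) (pureTensorPow ψ (n + k))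
      = Real.sqrt (((n + d - 1).choose (d - 1) : ℝ) / ((n + k + d - 1).choose (d - 1))) :=
  wernerClone_trace_and_fidelity_general hd ψ hψ
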